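/- arXiv:2502.13822 — 6 statements merged into one kernel-verified Lean document; each statement's English description precedes it below -/
import Mathlib

section
/- For any real number x > 0 and any λ ∈ (0,1), setting α₁ = e^x − x, α₃ = e^x − 1, and α₄ = λ·e^x, one has (α₁ + α₄)/2 + √((α₁ − α₄)² + 4α₃²)/2 ≤ exp(5x²/(1−λ)). -/
lemma key_poly (x m u : ℝ) (hx : 0 < x) (hx1 : x ≤ 1) (hm : 0 < m) (hm1 : m < 1)
    (hu : m * u = 5 * x ^ 2) : (x + x ^ 2) ^ 2 ≤ (u - x ^ 2) * (m + u - x - x ^ 2) := by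
  have hu5 : 5 * x ^ 2 ≤ u := by
    nlinarith [mul_pos hm (show 0 < u by nlinarith)]
  nlinarith [sq_nonneg (u - x), sq_nonneg (m - x), sq_nonneg (u - 2*x), mul_pos hx hm,
    sq_nonneg (u - x^2), mul_nonneg (sq_nonneg x) hm.le, sq_nonneg x, sq_nonneg (m - 3*x)]

lemma fin_lem (a1 a3 a4 t : ℝ) (h1 : a1 ≤ t) (h4 : a4 ≤ t)
    (hp : a3 ^ 2 ≤ (t - a1) * (t - a4)) :
    (a1 + a4) / 2 + Real.sqrt ((a1 - a4) ^ 2 + 4 * a3 ^ 2) / 2 ≤ t := by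
  have h0 : (0:ℝ) ≤ 2 * t - (a1 + a4) := by linarith
  have hs : Real.sqrt ((a1 - a4) ^ 2 + 4 * a3 ^ 2) ≤ 2 * t - (a1 + a4) := by
    have : (a1 - a4) ^ 2 + 4 * a3 ^ 2 ≤ (2 * t - (a1 + a4)) ^ 2 := by nlinarith
    calc Real.sqrt ((a1 - a4) ^ 2 + 4 * a3 ^ 2) ≤ Real.sqrt ((2 * t - (a1 + a4)) ^ 2) :=
          Real.sqrt_le_sqrt this
      _ = 2 * t - (a1 + a4) := Real.sqrt_sq h0
  linarith

/-- Scalar inequality bounding the largest eigenvalue of the 2×2 symmetric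
matrix `[[α₁, α₃],[α₃, α₄]]` with `α₁ = e^x − x`, `α₃ = e^x − 1`, `α₄ = l·e^x`. -/
theorem stmt0 (x l : ℝ) (hx : 0 < x) (hl : l ∈ Set.Ioo (0 : ℝ) 1) :
    ((Real.exp x - x) + l * Real.exp x) / 2 +
      Real.sqrt (((Real.exp x - x) - l * Real.exp x) ^ 2 + 4 * (Real.exp x - 1) ^ 2) / 2 ≤
    Real.exp (5 * x ^ 2 / (1 - l)) := by
  obtain ⟨hl0, hl1⟩ := hl
  set m : ℝ := 1 - l with hm_def
  have hm : 0 < m := by simp [hm_def]; linarith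
  have hm1 : m < 1 := by simp [hm_def]; linarith
  set e : ℝ := Real.exp x with he_def
  set t : ℝ := Real.exp (5 * x ^ 2 / m) with ht_def
  have he_lo : 1 + x ≤ e := by have := Real.add_one_le_exp x; linarith
  have he_pos : 0 < e := Real.exp_pos x
  have hl_eq : l = 1 - m := by ring
  rcases le_or_gt x 1 with hx1 | hx1
  · -- small case
    have he_hi : e ≤ 1 + x + x ^ 2 := by
      have h := Real.exp_bound' hx.le hx1 (n := 2) (by norm_num)
      simp [Finset.sum_range_succ] at h
      nlinarith [sq_nonneg x]
    set u : ℝ := 5 * x ^ 2 / m with hu_def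
    have hu : m * u = 5 * x ^ 2 := by rw [hu_def]; field_simp [hm.ne']
    have hu5 : 5 * x ^ 2 ≤ u := by
      rw [hu_def, le_div_iff₀ hm]; nlinarith
    have ht_lo : 1 + u ≤ t := by
      have := Real.add_one_le_exp u
      rw [ht_def]; linarith
    have hkey := key_poly x m u hx hx1 hm hm1 hu
    have hA : u - x ^ 2 ≤ t - (e - x) := by nlinarith
    have hApos : 0 ≤ u - x ^ 2 := by nlinarith
    have hB : m + u - x - x ^ 2 ≤ t - l * e := by
      rw [hl_eq]; nlinarith
    have hBpos : 0 ≤ m + u - x - x ^ 2 := by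
      by_contra h
      push_neg at h
      nlinarith [sq_nonneg (x + x^2)]
    have hprod : (e - 1) ^ 2 ≤ (t - (e - x)) * (t - l * e) := by
      have h1 : (e - 1) ^ 2 ≤ (x + x ^ 2) ^ 2 := by nlinarith
      have h2 : (u - x ^ 2) * (m + u - x - x ^ 2) ≤ (t - (e - x)) * (t - l * e) :=
        mul_le_mul hA hB hBpos (by linarith)
      linarith
    have h1 : e - x ≤ t := by nlinarith
    have h4 : l * e ≤ t := by nlinarith
    exact fin_lem (e - x) (e - 1) (l * e) t h1 h4 hprod
  · -- large case
    have ht2 : 2 * e ≤ t := by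
      have h1 : x + 1 ≤ 5 * x ^ 2 / m := by
        rw [le_div_iff₀ hm]; nlinarith
      have : Real.exp (x + 1) ≤ t := Real.exp_le_exp.2 h1
      rw [Real.exp_add] at this
      have h2 : (2:ℝ) ≤ Real.exp 1 := by have := Real.add_one_le_exp (1:ℝ); linarith
      nlinarith [Real.exp_pos x]
    have hle : l * e ≤ e := by
      have h := mul_le_mul_of_nonneg_right hl1.le he_pos.le
      simpa using h
    have h1 : e - x ≤ t := by linarith
    have h4 : l * e ≤ t := by linarith
    have hprod : (e - 1) ^ 2 ≤ (t - (e - x)) * (t - l * e) := by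
      have h2 : e * e ≤ (t - (e - x)) * (t - l * e) :=
        mul_le_mul (by linarith) (by linarith) he_pos.le (by linarith)
      nlinarith [h2]
    exact fin_lem (e - x) (e - 1) (l * e) t h1 h4 hprod
end

section
/- Let A, B be d×d real symmetric positive definite matrices. Then Tr(A⁻¹(A − B)) ≤ Tr(log A) − Tr(log B), where log denotes the matrix logarithm. -/
open Matrix

lemma trace_eq_sum_eig {d : ℕ} (M : Matrix (Fin d) (Fin d) ℝ) (hM : M.IsHermitian) :
    M.trace = ∑ i, hM.eigenvalues i := by
  set U : Matrix (Fin d) (Fin d) ℝ := (hM.eigenvectorUnitary : Matrix (Fin d) (Fin d) ℝ) with hUdef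
  have hU : star U = U⁻¹ :=
    (Matrix.inv_eq_left_inv (Matrix.mem_unitaryGroup_iff'.mp hM.eigenvectorUnitary.2)).symm
  have hunit : IsUnit U := by
    apply Matrix.isUnit_iff_isUnit_det _ |>.mpr
    apply IsUnit.of_mul_eq_one (star U).det
    rw [← det_mul, Matrix.mem_unitaryGroup_iff.mp hM.eigenvectorUnitary.2, det_one]
  have hspec := hM.spectral_theorem
  simp only [Unitary.conjStarAlgAut_apply, Unitary.coe_star, ← hUdef] at hspec
  rw [hU] at hspec
  conv_lhs => rw [hspec]
  rw [Matrix.trace_mul_comm, ← mul_assoc,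
    Matrix.nonsing_inv_mul _ (Matrix.isUnit_iff_isUnit_det _ |>.mp hunit), one_mul,
    Matrix.trace_diagonal]
  simp

lemma det_exp_symm {d : ℕ} (M : Matrix (Fin d) (Fin d) ℝ) (hM : M.IsHermitian) :
    (NormedSpace.exp M).det = Real.exp M.trace := by
  set U : Matrix (Fin d) (Fin d) ℝ := (hM.eigenvectorUnitary : Matrix (Fin d) (Fin d) ℝ) with hUdef
  have hU : star U = U⁻¹ :=
    (Matrix.inv_eq_left_inv (Matrix.mem_unitaryGroup_iff'.mp hM.eigenvectorUnitary.2)).symm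
  have hunit : IsUnit U := by
    apply Matrix.isUnit_iff_isUnit_det _ |>.mpr
    apply IsUnit.of_mul_eq_one (star U).det
    rw [← det_mul, Matrix.mem_unitaryGroup_iff.mp hM.eigenvectorUnitary.2, det_one]
  have hspec := hM.spectral_theorem
  simp only [Unitary.conjStarAlgAut_apply, Unitary.coe_star, ← hUdef] at hspec
  rw [hU] at hspec
  have htr := trace_eq_sum_eig M hM
  conv_lhs => rw [hspec]
  rw [Matrix.exp_conj _ _ hunit, Matrix.exp_diagonal]
  rw [Matrix.det_mul, Matrix.det_mul, mul_comm, ← mul_assoc, ← Matrix.det_mul,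
    Matrix.nonsing_inv_mul _ (Matrix.isUnit_iff_isUnit_det _ |>.mp hunit), det_one, one_mul]
  rw [Matrix.det_diagonal, htr, Real.exp_sum]
  congr 1 with i
  simp [Pi.exp_def, ← Real.exp_eq_exp_ℝ]

/-- Klein's inequality consequence: for symmetric positive definite matrices `A`, `B`
with (symmetric) matrix logarithms `LA`, `LB` (i.e. `exp LA = A`, `exp LB = B`),
one has `Tr(A⁻¹(A − B)) ≤ Tr(log A) − Tr(log B)`. -/
theorem stmt1 {d : ℕ} (A B LA LB : Matrix (Fin d) (Fin d) ℝ)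
    (hA : A.PosDef) (hB : B.PosDef)
    (hLA : LA.IsSymm) (hLB : LB.IsSymm)
    (hexpA : NormedSpace.exp LA = A) (hexpB : NormedSpace.exp LB = B) :
    (A⁻¹ * (A - B)).trace ≤ LA.trace - LB.trace := by
  classical
  have hAd : 0 < A.det := hA.det_pos
  have hBd : 0 < B.det := hB.det_pos
  -- traces of logs
  have hLAH : LA.IsHermitian := by
    rw [Matrix.IsHermitian]; ext i j; simpa using (congrFun (congrFun hLA.eq j) i).symm
  have hLBH : LB.IsHermitian := by
    rw [Matrix.IsHermitian]; ext i j; simpa using (congrFun (congrFun hLB.eq j) i).symm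
  have hLAtr : LA.trace = Real.log A.det := by
    have h := det_exp_symm LA hLAH
    rw [hexpA] at h
    rw [h, Real.log_exp]
  have hLBtr : LB.trace = Real.log B.det := by
    have h := det_exp_symm LB hLBH
    rw [hexpB] at h
    rw [h, Real.log_exp]
  -- the conjugated matrix C
  have hAinv : A⁻¹.PosDef := hA.inv
  set T : Matrix (Fin d) (Fin d) ℝ := cfc Real.sqrt A⁻¹ with hTdef
  have hTps : T.IsHermitian := by
    have h : IsSelfAdjoint T := cfc_predicate _ _
    exact h
  have hTT : T * T = A⁻¹ := by
    rw [hTdef, ← cfc_mul (a := A⁻¹) Real.sqrt Real.sqrt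
      (hf := Real.continuous_sqrt.continuousOn) (hg := Real.continuous_sqrt.continuousOn)]
    conv_rhs => rw [← cfc_id' ℝ A⁻¹ (ha := hAinv.1)]
    refine cfc_congr fun x hx => Real.mul_self_sqrt ?_
    obtain ⟨i, rfl⟩ := hAinv.1.spectrum_real_eq_range_eigenvalues ▸ hx
    exact hAinv.posSemidef.eigenvalues_nonneg i
  set C : Matrix (Fin d) (Fin d) ℝ := T * B * T with hCdef
  have hCps : C.PosSemidef := by
    have h := hB.posSemidef.mul_mul_conjTranspose_same T
    rwa [hTps] at h
  have htrC : C.trace = (A⁻¹ * B).trace := by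
    rw [hCdef, Matrix.trace_mul_comm, ← mul_assoc, hTT]
  have hdetC : C.det = A.det⁻¹ * B.det := by
    have h2 : T.det * T.det = A.det⁻¹ := by
      rw [← det_mul, hTT, Matrix.det_nonsing_inv, Ring.inverse_eq_inv']
    rw [hCdef, det_mul, det_mul, mul_comm T.det B.det, mul_assoc, h2, mul_comm]
  have hdetCpos : 0 < C.det := by
    rw [hdetC]; positivity
  -- eigenvalues of C
  set μ : Fin d → ℝ := hCps.1.eigenvalues with hμ
  have hprod : C.det = ∏ i, μ i := by
    have := hCps.1.det_eq_prod_eigenvalues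
    simpa using this
  have hpos : ∀ i, 0 < μ i := by
    intro i
    rcases lt_or_eq_of_le (hCps.eigenvalues_nonneg i) with h | h
    · exact h
    · exfalso
      have : C.det = 0 := by
        rw [hprod]
        exact Finset.prod_eq_zero (Finset.mem_univ i) h.symm
      exact absurd this (ne_of_gt hdetCpos)
  have hsum : C.trace = ∑ i, μ i := trace_eq_sum_eig C hCps.1
  -- Klein: log det C ≤ trace C - d
  have hlog : Real.log C.det ≤ C.trace - d := by
    rw [hprod, Real.log_prod (fun i _ => ne_of_gt (hpos i)), hsum]
    have : ∑ i : Fin d, Real.log (μ i) ≤ ∑ i : Fin d, (μ i - 1) :=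
      Finset.sum_le_sum fun i _ => Real.log_le_sub_one_of_pos (hpos i)
    simpa [Finset.sum_sub_distrib] using this
  -- LHS computation
  have hlhs : (A⁻¹ * (A - B)).trace = (d : ℝ) - C.trace := by
    rw [mul_sub, Matrix.trace_sub, Matrix.nonsing_inv_mul _ hAd.ne'.isUnit, Matrix.trace_one,
      htrC]
    simp
  rw [hlhs, hLAtr, hLBtr]
  have : Real.log C.det = Real.log B.det - Real.log A.det := by
    rw [hdetC, Real.log_mul (by positivity) (ne_of_gt hBd), Real.log_inv]
    ring
  linarith [hlog, this ▸ hlog]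
end

section
/- Let β ∈ (0,1) and α ∈ (1/2, 1). Then for every positive integer t, t^α · ∏_{k=1}^{t} (1 − β k^{−α}) ≤ e · (α/β)^{α/(1−α)}. -/
/-- Contraction bound for products of stepsize factors:
`t^α ∏_{k=1}^t (1 − β k^{−α}) ≤ e (α/β)^{α/(1−α)}`. -/
theorem stmt3 (β α : ℝ) (hβ : β ∈ Set.Ioo (0 : ℝ) 1)
    (hα : α ∈ Set.Ioo (1/2 : ℝ) 1) (t : ℕ) (ht : 0 < t) :
    (t : ℝ) ^ α * ∏ k ∈ Finset.Icc 1 t, (1 - β * (k : ℝ) ^ (-α)) ≤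
      Real.exp 1 * (α / β) ^ (α / (1 - α)) := by
  obtain ⟨hβ0, hβ1⟩ := hβ
  obtain ⟨hα2, hα1⟩ := hα
  have hα0 : 0 < α := by linarith
  have h1α : 0 < 1 - α := by linarith
  have ht0 : (0:ℝ) < t := by exact_mod_cast ht
  have ht1 : (1:ℝ) ≤ t := by exact_mod_cast ht
  -- the sum
  set S : ℝ := ∑ k ∈ Finset.Icc 1 t, (k : ℝ) ^ (-α) with hS
  -- Step B: product ≤ exp(-β S)
  have hprod : ∏ k ∈ Finset.Icc 1 t, (1 - β * (k : ℝ) ^ (-α)) ≤ Real.exp (-(β * S)) := by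
    have h1 : ∀ k ∈ Finset.Icc 1 t, (0:ℝ) ≤ 1 - β * (k : ℝ) ^ (-α) := by
      intro k hk
      have hk1 : (1:ℝ) ≤ k := by
        exact_mod_cast (Finset.mem_Icc.mp hk).1
      have : (k:ℝ) ^ (-α) ≤ 1 :=
        Real.rpow_le_one_of_one_le_of_nonpos hk1 (by linarith)
      nlinarith [Real.rpow_pos_of_pos (by linarith : (0:ℝ) < k) (-α)]
    have h2 : ∀ k ∈ Finset.Icc 1 t,
        (1 - β * (k : ℝ) ^ (-α)) ≤ Real.exp (-(β * (k : ℝ) ^ (-α))) := by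
      intro k _
      have := Real.add_one_le_exp (-(β * (k : ℝ) ^ (-α)))
      linarith
    calc ∏ k ∈ Finset.Icc 1 t, (1 - β * (k : ℝ) ^ (-α))
        ≤ ∏ k ∈ Finset.Icc 1 t, Real.exp (-(β * (k : ℝ) ^ (-α))) :=
          Finset.prod_le_prod h1 h2
      _ = Real.exp (∑ k ∈ Finset.Icc 1 t, (-(β * (k : ℝ) ^ (-α)))) :=
          (Real.exp_sum _ _).symm
      _ = Real.exp (-(β * S)) := by
          rw [hS, Finset.mul_sum, ← Finset.sum_neg_distrib]
  -- Step C: S ≥ (t^(1-α) - 1)/(1-α)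
  have hSum : ((t:ℝ) ^ (1-α) - 1) / (1-α) ≤ S := by
    have hanti : AntitoneOn (fun x : ℝ => x ^ (-α)) (Set.Icc (1:ℝ) (1 + t)) := by
      intro x hx y hy hxy
      exact Real.rpow_le_rpow_of_nonpos (by linarith [hx.1]) hxy (by linarith)
    have hint := hanti.integral_le_sum
    have hival : (∫ x in (1:ℝ)..(1 + t), x ^ (-α))
        = ((1 + (t:ℝ)) ^ (-α + 1) - 1 ^ (-α + 1)) / (-α + 1) :=
      integral_rpow (Or.inl (by linarith))
    have hsum_eq : ∑ i ∈ Finset.range t, ((1:ℝ) + i) ^ (-α) = S := by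
      rw [hS, ← Finset.Ico_add_one_right_eq_Icc, Finset.sum_Ico_eq_sum_range]
      simp only [Nat.add_sub_cancel, Nat.succ_sub_one]
      apply Finset.sum_congr rfl
      intro i _
      norm_num
    rw [hival, hsum_eq] at hint
    have h1p : (1:ℝ) ^ (-α + 1) = 1 := Real.one_rpow _
    rw [h1p] at hint
    have hmono : (t:ℝ) ^ (1-α) ≤ (1 + (t:ℝ)) ^ (1-α) :=
      Real.rpow_le_rpow (le_of_lt ht0) (by linarith) (le_of_lt h1α)
    rw [show (-α + 1) = 1 - α by ring] at hint
    calc ((t:ℝ) ^ (1-α) - 1) / (1-α) ≤ ((1 + (t:ℝ)) ^ (1-α) - 1) / (1-α) := by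
          gcongr
      _ ≤ S := hint
  -- Step D: combine
  have htα : (t:ℝ) ^ α = Real.exp (α * Real.log t) := by
    rw [Real.rpow_def_of_pos ht0, mul_comm]
  have hprod_nonneg : (0:ℝ) ≤ ∏ k ∈ Finset.Icc 1 t, (1 - β * (k : ℝ) ^ (-α)) := by
    apply Finset.prod_nonneg
    intro k hk
    have hk1 : (1:ℝ) ≤ k := by exact_mod_cast (Finset.mem_Icc.mp hk).1
    have : (k:ℝ) ^ (-α) ≤ 1 :=
      Real.rpow_le_one_of_one_le_of_nonpos hk1 (by linarith)
    nlinarith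
  have hstep : (t : ℝ) ^ α * ∏ k ∈ Finset.Icc 1 t, (1 - β * (k : ℝ) ^ (-α))
      ≤ Real.exp (α * Real.log t - β * S) := by
    rw [htα, show α * Real.log t - β * S = α * Real.log t + (-(β * S)) by ring,
      Real.exp_add]
    exact mul_le_mul_of_nonneg_left hprod (le_of_lt (Real.exp_pos _))
  refine hstep.trans ?_
  -- key scalar inequality
  have hRHS : Real.exp 1 * (α / β) ^ (α / (1 - α))
      = Real.exp (1 + α / (1 - α) * Real.log (α / β)) := by
    rw [Real.exp_add, Real.rpow_def_of_pos (div_pos hα0 hβ0)]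
    ring_nf
  rw [hRHS]
  apply Real.exp_le_exp.mpr
  have hβS : -(β * S) ≤ -(β * (((t:ℝ) ^ (1-α) - 1) / (1-α))) := by
    have := mul_le_mul_of_nonneg_left hSum (le_of_lt hβ0)
    linarith
  have key : α * Real.log t - β * (((t:ℝ) ^ (1-α) - 1) / (1-α))
      ≤ 1 + α / (1 - α) * Real.log (α / β) := by
    set u : ℝ := (t:ℝ) ^ (1-α) with hu
    have hu0 : 0 < u := Real.rpow_pos_of_pos ht0 _
    have hlogu : Real.log u = (1-α) * Real.log t := Real.log_rpow ht0 _
    have hv : Real.log (β * u / α) ≤ β * u / α - 1 :=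
      Real.log_le_sub_one_of_pos (by positivity)
    have hlogv : Real.log (β * u / α) = Real.log β + Real.log u - Real.log α := by
      rw [Real.log_div (by positivity) (ne_of_gt hα0), Real.log_mul (ne_of_gt hβ0) (ne_of_gt hu0)]
    have hlogab : Real.log (α / β) = Real.log α - Real.log β :=
      Real.log_div (ne_of_gt hα0) (ne_of_gt hβ0)
    rw [hlogab]
    rw [hlogv] at hv
    -- multiply hv by α > 0 : α log β + α log u - α log α ≤ β u - α
    have hv2 : α * Real.log β + α * Real.log u - α * Real.log α ≤ β * u - α := by
      have := mul_le_mul_of_nonneg_left hv (le_of_lt hα0)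
      have hαne : α ≠ 0 := ne_of_gt hα0
      field_simp at this
      nlinarith
    have hnum : α * Real.log u - β * (u - 1) ≤ (1-α) + α * (Real.log α - Real.log β) := by
      linarith
    calc α * Real.log (t:ℝ) - β * ((u - 1) / (1-α))
        = (α * Real.log u - β * (u - 1)) / (1-α) := by
          rw [hlogu]; field_simp
      _ ≤ ((1-α) + α * (Real.log α - Real.log β)) / (1-α) := by gcongr
      _ = 1 + α / (1-α) * (Real.log α - Real.log β) := by field_simp
  linarith
end

section
/- Let β ∈ (0,1) and α ∈ (1/2,1). Then for every positive integer t, max_{1 ≤ i ≤ t} i^{−α} ∏_{k=i+1}^{t} (1 − β k^{−α}) ≤ e · (α/β)^{α/(1−α)} · t^{−α}. -/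
set_option maxHeartbeats 1000000

open Real Finset

/-- Bernoulli-type upper bound: `(x+1)^a ≤ x^a + a·x^(a-1)` for `x > 0`, `0 ≤ a ≤ 1`. -/
private lemma lemA {x a : ℝ} (hx : 0 < x) (h0 : 0 ≤ a) (h1 : a ≤ 1) :
    (x + 1) ^ a ≤ x ^ a + a * x ^ (a - 1) := by
  have hxi : (0:ℝ) < 1 / x := by positivity
  have hb : ((1:ℝ) + 1 / x) ^ a ≤ 1 + a * (1 / x) :=
    rpow_one_add_le_one_add_mul_self (by linarith) h0 h1
  have hfac : x + 1 = x * (1 + 1 / x) := by field_simp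
  have hxa : (0:ℝ) ≤ x ^ a := rpow_nonneg hx.le a
  calc (x + 1) ^ a = x ^ a * ((1 + 1 / x) ^ a) := by
        rw [hfac, mul_rpow hx.le (by positivity)]
    _ ≤ x ^ a * (1 + a * (1 / x)) := mul_le_mul_of_nonneg_left hb hxa
    _ = x ^ a + a * (x ^ a / x) := by ring
    _ = x ^ a + a * x ^ (a - 1) := by rw [rpow_sub hx a 1, rpow_one]

/-- Bernoulli-type lower bound: `a·(x+1)^(a-1) ≤ (x+1)^a - x^a` for `x > 0`, `0 ≤ a ≤ 1`. -/
private lemma lemB {x a : ℝ} (hx : 0 < x) (h0 : 0 ≤ a) (h1 : a ≤ 1) :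
    a * (x + 1) ^ (a - 1) ≤ (x + 1) ^ a - x ^ a := by
  have hx1 : (0:ℝ) < x + 1 := by linarith
  have hinv : 1 / (x + 1) ≤ 1 := by rw [div_le_one hx1]; linarith
  have hs : -1 ≤ -(1 / (x + 1)) := by linarith
  have hb : ((1:ℝ) + -(1 / (x + 1))) ^ a ≤ 1 + a * -(1 / (x + 1)) :=
    rpow_one_add_le_one_add_mul_self hs h0 h1
  have hfac : x = (x + 1) * (1 + -(1 / (x + 1))) := by field_simp; ring
  have hpos : (0:ℝ) ≤ 1 + -(1 / (x + 1)) := by linarith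
  have hxa : (0:ℝ) ≤ (x + 1) ^ a := rpow_nonneg hx1.le a
  have key : x ^ a ≤ (x + 1) ^ a - a * ((x + 1) ^ a / (x + 1)) := by
    calc x ^ a = (x + 1) ^ a * ((1 + -(1 / (x + 1))) ^ a) := by
          conv_lhs => rw [hfac]
          rw [mul_rpow hx1.le hpos]
      _ ≤ (x + 1) ^ a * (1 + a * -(1 / (x + 1))) := mul_le_mul_of_nonneg_left hb hxa
      _ = (x + 1) ^ a - a * ((x + 1) ^ a / (x + 1)) := by ring
  have hdiv : (x + 1) ^ a / (x + 1) = (x + 1) ^ (a - 1) := by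
    rw [rpow_sub hx1 a 1, rpow_one]
  rw [hdiv] at key; linarith

/-- The forward difference `x ↦ (x+1)^a - x^a` is antitone (at distance ≥ 1). -/
private lemma d_anti {x y a : ℝ} (h0 : 0 ≤ a) (h1 : a ≤ 1) (hx : 0 < x) (hxy : x + 1 ≤ y) :
    (y + 1) ^ a - y ^ a ≤ (x + 1) ^ a - x ^ a := by
  have hy : 0 < y := by linarith
  have hA := lemA hy h0 h1
  have hB := lemB hx h0 h1
  have hcmp : y ^ (a - 1) ≤ (x + 1) ^ (a - 1) :=
    rpow_le_rpow_of_nonpos (by linarith) hxy (by linarith)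
  nlinarith [mul_le_mul_of_nonneg_left hcmp h0]

/-- Case 1: if the first forward difference is at most `β`, then the weighted product is
bounded by `t^(-α)` (monotone chain, by induction on `t`). -/
private lemma case1 {β α : ℝ} (hβ0 : 0 < β) (hβ1 : β < 1) (hα0 : 0 < α) (hα1 : α < 1)
    (i : ℕ) (hi : 1 ≤ i) (hd : ((i:ℝ) + 1) ^ α - (i:ℝ) ^ α ≤ β) :
    ∀ t : ℕ, i ≤ t →
      (i:ℝ) ^ (-α) * ∏ k ∈ Finset.Icc (i + 1) t, (1 - β * (k:ℝ) ^ (-α)) ≤ (t:ℝ) ^ (-α) := by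
  refine Nat.le_induction ?_ ?_
  · rw [Finset.Icc_eq_empty (by omega)]; simp
  · intro j hj IH
    have hij : (1:ℕ) ≤ j := hi.trans hj
    have hj0 : (0:ℝ) < (j:ℝ) := by exact_mod_cast hij
    have hdj : ((j:ℝ) + 1) ^ α - (j:ℝ) ^ α ≤ β := by
      rcases eq_or_lt_of_le hj with h | h
      · have hij' : (i:ℝ) = (j:ℝ) := by exact_mod_cast h
        rw [← hij']; exact hd
      · refine le_trans (d_anti hα0.le hα1.le (show (0:ℝ) < (i:ℝ) by exact_mod_cast hi) ?_) hd
        have hle : i + 1 ≤ j := h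
        have : ((i:ℝ) + 1) ≤ (j:ℝ) := by exact_mod_cast hle
        linarith
    have hfpos : (0:ℝ) ≤ 1 - β * ((j:ℝ) + 1) ^ (-α) := by
      have h1 : ((j:ℝ) + 1) ^ (-α) ≤ 1 :=
        rpow_le_one_of_one_le_of_nonpos (by linarith) (by linarith)
      nlinarith [rpow_nonneg (show (0:ℝ) ≤ (j:ℝ) + 1 by linarith) (-α)]
    have hkey : (j:ℝ) ^ (-α) * (1 - β * ((j:ℝ) + 1) ^ (-α)) ≤ ((j:ℝ) + 1) ^ (-α) := by
      have m1 : ((j:ℝ) + 1) ^ (-α) * ((j:ℝ) + 1) ^ α = 1 := by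
        rw [← rpow_add (by linarith : (0:ℝ) < (j:ℝ) + 1)]
        simp
      have m2 : (j:ℝ) ^ (-α) * (j:ℝ) ^ α = 1 := by
        rw [← rpow_add hj0]; simp
      have heq : 1 - β * ((j:ℝ) + 1) ^ (-α)
          = ((j:ℝ) + 1) ^ (-α) * (((j:ℝ) + 1) ^ α - β) := by
        linear_combination -m1
      have hle2 : ((j:ℝ) + 1) ^ α - β ≤ (j:ℝ) ^ α := by linarith
      have hnn1 : (0:ℝ) ≤ (j:ℝ) ^ (-α) := rpow_nonneg hj0.le _
      have hnn2 : (0:ℝ) ≤ ((j:ℝ) + 1) ^ (-α) := rpow_nonneg (by linarith) _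
      calc (j:ℝ) ^ (-α) * (1 - β * ((j:ℝ) + 1) ^ (-α))
          = (j:ℝ) ^ (-α) * (((j:ℝ) + 1) ^ (-α) * (((j:ℝ) + 1) ^ α - β)) := by rw [heq]
        _ ≤ (j:ℝ) ^ (-α) * (((j:ℝ) + 1) ^ (-α) * (j:ℝ) ^ α) := by
            apply mul_le_mul_of_nonneg_left (mul_le_mul_of_nonneg_left hle2 hnn2) hnn1
        _ = ((j:ℝ) + 1) ^ (-α) * ((j:ℝ) ^ (-α) * (j:ℝ) ^ α) := by ring
        _ = ((j:ℝ) + 1) ^ (-α) := by rw [m2, mul_one]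
    rw [Finset.prod_Icc_succ_top (by omega)]
    push_cast
    calc (i:ℝ) ^ (-α) * ((∏ k ∈ Finset.Icc (i + 1) j, (1 - β * (k:ℝ) ^ (-α)))
            * (1 - β * ((j:ℝ) + 1) ^ (-α)))
        = ((i:ℝ) ^ (-α) * ∏ k ∈ Finset.Icc (i + 1) j, (1 - β * (k:ℝ) ^ (-α)))
            * (1 - β * ((j:ℝ) + 1) ^ (-α)) := by ring
      _ ≤ (j:ℝ) ^ (-α) * (1 - β * ((j:ℝ) + 1) ^ (-α)) :=
            mul_le_mul_of_nonneg_right IH hfpos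
      _ ≤ ((j:ℝ) + 1) ^ (-α) := hkey

/-- Integral-type lower bound for the sum `∑_{k=i+1}^t k^(-α)`. -/
private lemma sumLB {α : ℝ} (hα0 : 0 < α) (hα1 : α < 1) (i : ℕ) (hi : 1 ≤ i) :
    ∀ t : ℕ, i ≤ t →
      ((t:ℝ) + 1) ^ (1 - α) - ((i:ℝ) + 1) ^ (1 - α)
        ≤ (1 - α) * ∑ k ∈ Finset.Icc (i + 1) t, (k:ℝ) ^ (-α) := by
  refine Nat.le_induction ?_ ?_
  · rw [Finset.Icc_eq_empty (by omega)]; simp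
  · intro j hj IH
    have hij : (1:ℕ) ≤ j := hi.trans hj
    have hj0 : (0:ℝ) < (j:ℝ) + 1 := by positivity
    have hA := lemA (x := (j:ℝ) + 1) (a := 1 - α) hj0 (by linarith) (by linarith)
    rw [show ((1:ℝ) - α - 1) = -α by ring] at hA
    rw [Finset.sum_Icc_succ_top (by omega)]
    push_cast
    linarith

/-- Maximum of weighted contraction factors:
for all `1 ≤ i ≤ t`, `i^{−α} ∏_{k=i+1}^t (1 − β k^{−α}) ≤ e (α/β)^{α/(1−α)} t^{−α}`. -/
theorem stmt5 (β α : ℝ) (hβ : β ∈ Set.Ioo (0 : ℝ) 1)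
    (hα : α ∈ Set.Ioo (1/2 : ℝ) 1) (t : ℕ) (ht : 0 < t) :
    ∀ i : ℕ, 1 ≤ i → i ≤ t →
      (i : ℝ) ^ (-α) * ∏ k ∈ Finset.Icc (i + 1) t, (1 - β * (k : ℝ) ^ (-α)) ≤
        Real.exp 1 * (α / β) ^ (α / (1 - α)) * (t : ℝ) ^ (-α) := by
  obtain ⟨hβ0, hβ1⟩ := hβ
  obtain ⟨hα2, hα1⟩ := hα
  have hα0 : (0:ℝ) < α := by linarith
  have h1a : (0:ℝ) < 1 - α := by linarith
  have hα0' : α ≠ 0 := ne_of_gt hα0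
  have h1a' : (1:ℝ) - α ≠ 0 := ne_of_gt h1a
  have hβ0' : β ≠ 0 := ne_of_gt hβ0
  have ht0 : (0:ℝ) < (t:ℝ) := by exact_mod_cast ht
  -- e·C ≥ 1
  have hC1 : (1:ℝ) ≤ Real.exp 1 * (α / β) ^ (α / (1 - α)) := by
    have hp : (0:ℝ) < α / (1 - α) := by positivity
    have h1 : α ≤ α / β := by
      rw [le_div_iff₀ hβ0]; nlinarith
    have h2 : α ^ (α / (1 - α)) ≤ (α / β) ^ (α / (1 - α)) :=
      rpow_le_rpow hα0.le h1 hp.le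
    have hlog : -((1 - α) / α) ≤ Real.log α := by
      have h4 := Real.log_le_sub_one_of_pos (show (0:ℝ) < α⁻¹ by positivity)
      rw [Real.log_inv] at h4
      have : α⁻¹ - 1 = (1 - α) / α := by field_simp
      linarith [this ▸ h4]
    have h3 : Real.exp (-1) ≤ α ^ (α / (1 - α)) := by
      rw [← Real.exp_log (rpow_pos_of_pos hα0 (α / (1 - α))), Real.log_rpow hα0]
      apply Real.exp_le_exp.mpr
      have hmul := mul_le_mul_of_nonneg_left hlog hp.le
      have heq : (α / (1 - α)) * -((1 - α) / α) = -1 := by field_simp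
      linarith [heq ▸ hmul]
    calc (1:ℝ) = Real.exp 1 * Real.exp (-1) := by rw [← Real.exp_add]; norm_num
      _ ≤ Real.exp 1 * α ^ (α / (1 - α)) :=
          mul_le_mul_of_nonneg_left h3 (Real.exp_pos 1).le
      _ ≤ Real.exp 1 * (α / β) ^ (α / (1 - α)) :=
          mul_le_mul_of_nonneg_left h2 (Real.exp_pos 1).le
  intro i hi hit
  have hi0 : (0:ℝ) < (i:ℝ) := by exact_mod_cast hi
  have hi1 : (1:ℝ) ≤ (i:ℝ) := by exact_mod_cast hi
  by_cases hd : ((i:ℝ) + 1) ^ α - (i:ℝ) ^ α ≤ β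
  · calc (i : ℝ) ^ (-α) * ∏ k ∈ Finset.Icc (i + 1) t, (1 - β * (k : ℝ) ^ (-α))
        ≤ (t:ℝ) ^ (-α) := case1 hβ0 hβ1 hα0 hα1 i hi hd t hit
      _ = 1 * (t:ℝ) ^ (-α) := (one_mul _).symm
      _ ≤ Real.exp 1 * (α / β) ^ (α / (1 - α)) * (t : ℝ) ^ (-α) :=
          mul_le_mul_of_nonneg_right hC1 (rpow_nonneg ht0.le _)
  · push_neg at hd
    set p : ℝ := α / (1 - α) with hpdef
    set S : ℝ := ∑ k ∈ Finset.Icc (i + 1) t, (k:ℝ) ^ (-α) with hSdef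
    set lamJ : ℝ := (β / (1 - α)) * ((i:ℝ) + 1) ^ (1 - α) with hlamJ
    set lamT : ℝ := (β / (1 - α)) * (t:ℝ) ^ (1 - α) with hlamT
    -- β i^(1-α) < α
    have hβi : β * (i:ℝ) ^ (1 - α) < α := by
      have hA := lemA (x := (i:ℝ)) (a := α) hi0 hα0.le hα1.le
      have h5 : β < α * (i:ℝ) ^ (α - 1) := by linarith
      have h6 := mul_lt_mul_of_pos_right h5 (rpow_pos_of_pos hi0 (1 - α))
      rw [mul_assoc, ← rpow_add hi0] at h6
      norm_num at h6
      exact h6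
    -- sum lower bound
    have hT : (t:ℝ) ^ (1 - α) ≤ ((t:ℝ) + 1) ^ (1 - α) :=
      rpow_le_rpow ht0.le (by linarith) h1a.le
    have hS : (t:ℝ) ^ (1 - α) - ((i:ℝ) + 1) ^ (1 - α) ≤ (1 - α) * S := by
      have := sumLB hα0 hα1 i hi t hit
      linarith
    -- product ≤ exp(-βS)
    have hprod : ∏ k ∈ Finset.Icc (i + 1) t, (1 - β * (k:ℝ) ^ (-α))
        ≤ Real.exp (-(β * S)) := by
      have hnn : ∀ k ∈ Finset.Icc (i + 1) t, (0:ℝ) ≤ 1 - β * (k:ℝ) ^ (-α) := by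
        intro k hk
        have hk1 : 1 ≤ k := by have := (Finset.mem_Icc.mp hk).1; omega
        have hk1' : (1:ℝ) ≤ (k:ℝ) := by exact_mod_cast hk1
        have h1 : (k:ℝ) ^ (-α) ≤ 1 := rpow_le_one_of_one_le_of_nonpos hk1' (by linarith)
        nlinarith [rpow_nonneg (show (0:ℝ) ≤ (k:ℝ) by linarith) (-α)]
      have hle : ∀ k ∈ Finset.Icc (i + 1) t,
          1 - β * (k:ℝ) ^ (-α) ≤ Real.exp (-(β * (k:ℝ) ^ (-α))) := by
        intro k _
        linarith [Real.add_one_le_exp (-(β * (k:ℝ) ^ (-α)))]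
      calc ∏ k ∈ Finset.Icc (i + 1) t, (1 - β * (k:ℝ) ^ (-α))
          ≤ ∏ k ∈ Finset.Icc (i + 1) t, Real.exp (-(β * (k:ℝ) ^ (-α))) :=
            Finset.prod_le_prod hnn hle
        _ = Real.exp (∑ k ∈ Finset.Icc (i + 1) t, -(β * (k:ℝ) ^ (-α))) :=
            (Real.exp_sum _ _).symm
        _ = Real.exp (-(β * S)) := by
            congr 1
            rw [hSdef, Finset.mul_sum, ← Finset.sum_neg_distrib]
    -- exponent comparison
    have hexp : Real.exp (-(β * S)) ≤ Real.exp (lamJ - lamT) := by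
      apply Real.exp_le_exp.mpr
      have h7 := mul_le_mul_of_nonneg_left hS (show (0:ℝ) ≤ β / (1 - α) by positivity)
      have h8 : (β / (1 - α)) * ((1 - α) * S) = β * S := by field_simp
      rw [hlamJ, hlamT]
      nlinarith [h7, h8]
    -- lamJ ≤ p + 1
    have hia : (i:ℝ) ^ (-α) ≤ 1 := rpow_le_one_of_one_le_of_nonpos hi1 (by linarith)
    have hJle : lamJ ≤ p + 1 := by
      have hA2 := lemA (x := (i:ℝ)) (a := 1 - α) hi0 (by linarith) (by linarith)
      rw [show ((1:ℝ) - α - 1) = -α by ring] at hA2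
      have h9 : lamJ ≤ (β / (1 - α)) * ((i:ℝ) ^ (1 - α) + (1 - α) * (i:ℝ) ^ (-α)) := by
        rw [hlamJ]
        exact mul_le_mul_of_nonneg_left hA2 (by positivity)
      have e9 : (β / (1 - α)) * ((i:ℝ) ^ (1 - α) + (1 - α) * (i:ℝ) ^ (-α))
          = (β * (i:ℝ) ^ (1 - α)) / (1 - α) + β * (i:ℝ) ^ (-α) := by
        field_simp
      have h10 : (β * (i:ℝ) ^ (1 - α)) / (1 - α) ≤ α / (1 - α) := by
        rw [div_le_div_iff₀ h1a h1a]
        nlinarith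
      have h11 : β * (i:ℝ) ^ (-α) ≤ 1 :=
        mul_le_one₀ hβ1.le (rpow_nonneg hi0.le (-α)) hia
      rw [hpdef]
      linarith [e9 ▸ h9]
    -- ψ(T) bound : t^α ≤ (α/β)^p · exp(lamT − p)
    have hpsi : (t:ℝ) ^ α ≤ (α / β) ^ p * Real.exp (lamT - p) := by
      set y : ℝ := (β / α) * (t:ℝ) ^ (1 - α) with hydef
      have hy0 : (0:ℝ) < y := by
        rw [hydef]; positivity
      have hy : y ≤ Real.exp (y - 1) := by linarith [Real.add_one_le_exp (y - 1)]
      have h12 : (t:ℝ) ^ α = ((t:ℝ) ^ (1 - α)) ^ p := by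
        rw [← Real.rpow_mul ht0.le]
        congr 1
        rw [hpdef]; field_simp
      have h13 : (t:ℝ) ^ (1 - α) = (α / β) * y := by
        rw [hydef]; field_simp
      have h14 : ((α / β) * y) ^ p = (α / β) ^ p * y ^ p :=
        mul_rpow (by positivity) hy0.le
      have h15 : y ^ p ≤ (Real.exp (y - 1)) ^ p :=
        rpow_le_rpow hy0.le hy (by positivity)
      have h16 : (Real.exp (y - 1)) ^ p = Real.exp ((y - 1) * p) := (Real.exp_mul _ _).symm
      have h17 : (y - 1) * p = lamT - p := by
        rw [hydef, hlamT, hpdef]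
        field_simp
      calc (t:ℝ) ^ α = ((α / β) * y) ^ p := by rw [h12, h13]
        _ = (α / β) ^ p * y ^ p := h14
        _ ≤ (α / β) ^ p * Real.exp ((y - 1) * p) := by
            rw [← h16]
            exact mul_le_mul_of_nonneg_left h15 (rpow_nonneg (by positivity) p)
        _ = (α / β) ^ p * Real.exp (lamT - p) := by rw [h17]
    -- final assembly
    have hCpos : (0:ℝ) < (α / β) ^ p := rpow_pos_of_pos (by positivity) p
    have hta : (0:ℝ) < (t:ℝ) ^ α := rpow_pos_of_pos ht0 α
    have hfin : Real.exp (lamJ - lamT) * (t:ℝ) ^ α ≤ Real.exp 1 * (α / β) ^ p := by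
      calc Real.exp (lamJ - lamT) * (t:ℝ) ^ α
          ≤ Real.exp (lamJ - lamT) * ((α / β) ^ p * Real.exp (lamT - p)) :=
            mul_le_mul_of_nonneg_left hpsi (Real.exp_pos _).le
        _ = (α / β) ^ p * (Real.exp (lamJ - lamT) * Real.exp (lamT - p)) := by ring
        _ = (α / β) ^ p * Real.exp (lamJ - p) := by
            rw [← Real.exp_add]
            congr 2
            ring
        _ ≤ (α / β) ^ p * Real.exp 1 := by
            apply mul_le_mul_of_nonneg_left _ hCpos.le
            exact Real.exp_le_exp.mpr (by linarith)
        _ = Real.exp 1 * (α / β) ^ p := by ring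
    have hgoal : Real.exp (lamJ - lamT) ≤ Real.exp 1 * (α / β) ^ p * (t:ℝ) ^ (-α) := by
      have hinv : (t:ℝ) ^ (-α) = ((t:ℝ) ^ α)⁻¹ := rpow_neg ht0.le α
      rw [hinv, ← mul_le_mul_iff_of_pos_right hta, mul_assoc, inv_mul_cancel₀ (ne_of_gt hta), mul_one]
      exact hfin
    have hPnn : (0:ℝ) ≤ ∏ k ∈ Finset.Icc (i + 1) t, (1 - β * (k:ℝ) ^ (-α)) := by
      apply Finset.prod_nonneg
      intro k hk
      have hk1 : 1 ≤ k := by have := (Finset.mem_Icc.mp hk).1; omega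
      have hk1' : (1:ℝ) ≤ (k:ℝ) := by exact_mod_cast hk1
      have h1 : (k:ℝ) ^ (-α) ≤ 1 := rpow_le_one_of_one_le_of_nonpos hk1' (by linarith)
      nlinarith [rpow_nonneg (show (0:ℝ) ≤ (k:ℝ) by linarith) (-α)]
    calc (i : ℝ) ^ (-α) * ∏ k ∈ Finset.Icc (i + 1) t, (1 - β * (k : ℝ) ^ (-α))
        ≤ 1 * Real.exp (-(β * S)) := mul_le_mul hia hprod hPnn zero_le_one
      _ = Real.exp (-(β * S)) := one_mul _
      _ ≤ Real.exp (lamJ - lamT) := hexp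
      _ ≤ Real.exp 1 * (α / β) ^ p * (t:ℝ) ^ (-α) := hgoal
end

section
/- Let A be a d×d real matrix such that A + Aᵀ ⪰ 2cI for some c > 0, and let E be a d×d symmetric positive semidefinite matrix. Then there exists a unique symmetric positive semidefinite matrix X solving the Lyapunov equation AX + XAᵀ = E, and it satisfies ‖X‖ ≤ ‖E‖/(2c) and Tr(X) ≤ Tr(E)/(2c). -/
open Matrix

namespace Stmt10Aux

variable {d : ℕ}

lemma trace_nonneg_of_psd {M : Matrix (Fin d) (Fin d) ℝ} (hM : M.PosSemidef) : 0 ≤ M.trace := by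
  rw [Matrix.trace]
  refine Finset.sum_nonneg fun i _ => ?_
  have h := hM.dotProduct_mulVec_nonneg (Pi.single i 1)
  simpa [dotProduct, Matrix.mulVec, Pi.single_apply, Finset.sum_ite_eq] using h

lemma trace_mul_psd_nonneg {M N : Matrix (Fin d) (Fin d) ℝ} (hM : M.PosSemidef)
    (hN : N.PosSemidef) : 0 ≤ (M * N).trace := by
  open scoped MatrixOrder in
  obtain ⟨B, rfl⟩ := CStarAlgebra.nonneg_iff_eq_star_mul_self.mp hN.nonneg
  rw [← Matrix.mul_assoc, Matrix.trace_mul_cycle]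
  exact trace_nonneg_of_psd (hM.mul_mul_conjTranspose_same B)

lemma coercive_trace {A : Matrix (Fin d) (Fin d) ℝ} {c : ℝ}
    (hcoer : (A + Aᵀ - (2 * c) • (1 : Matrix (Fin d) (Fin d) ℝ)).PosSemidef)
    {M : Matrix (Fin d) (Fin d) ℝ} (hM : M.PosSemidef) :
    2 * c * M.trace ≤ ((A + Aᵀ) * M).trace := by
  have h0 := trace_mul_psd_nonneg hcoer hM
  have h1 : ((A + Aᵀ - (2 * c) • (1 : Matrix (Fin d) (Fin d) ℝ)) * M).trace
      = ((A + Aᵀ) * M).trace - 2 * c * M.trace := by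
    rw [Matrix.sub_mul, Matrix.trace_sub, Matrix.smul_mul, Matrix.one_mul,
      Matrix.trace_smul, smul_eq_mul]
  linarith [h1 ▸ h0]

lemma trace_transpose_mul_symm {A M : Matrix (Fin d) (Fin d) ℝ} (hM : Mᵀ = M) :
    (A * M).trace = (Aᵀ * M).trace := by
  conv_lhs => rw [← Matrix.trace_transpose, Matrix.transpose_mul]
  rw [hM, Matrix.trace_mul_comm]

lemma eq_zero_of_trace_mul_transpose {D : Matrix (Fin d) (Fin d) ℝ}
    (h : (D * Dᵀ).trace = 0) : D = 0 := by
  have h2 : ∑ i, ∑ j, (D i j) ^ 2 = 0 := by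
    simpa [Matrix.trace, Matrix.diag, Matrix.mul_apply, sq] using h
  have h3 := (Finset.sum_eq_zero_iff_of_nonneg
    (fun i _ => Finset.sum_nonneg fun j _ => sq_nonneg (D i j))).mp h2
  ext i j
  have h4 := (Finset.sum_eq_zero_iff_of_nonneg
    (fun j _ => sq_nonneg (D i j))).mp (h3 i (Finset.mem_univ i)) j (Finset.mem_univ j)
  simpa using pow_eq_zero_iff two_ne_zero |>.mp h4

lemma lyap_inj {A : Matrix (Fin d) (Fin d) ℝ} {c : ℝ} (hc : 0 < c)
    (hcoer : (A + Aᵀ - (2 * c) • (1 : Matrix (Fin d) (Fin d) ℝ)).PosSemidef)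
    {D : Matrix (Fin d) (Fin d) ℝ} (hD : A * D + D * Aᵀ = 0) : D = 0 := by
  have hDDT : (D * Dᵀ).PosSemidef := by
    simpa [Matrix.conjTranspose_eq_transpose_of_trivial] using
      Matrix.posSemidef_self_mul_conjTranspose D
  have hDTD : (Dᵀ * D).PosSemidef := by
    simpa [Matrix.conjTranspose_eq_transpose_of_trivial] using
      Matrix.posSemidef_conjTranspose_mul_self D
  have e1 : A * (D * Dᵀ) + D * Aᵀ * Dᵀ = 0 := by
    have := congrArg (fun M => M * Dᵀ) hD
    simpa [Matrix.add_mul, Matrix.mul_assoc] using this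
  have e2 : (A * (D * Dᵀ)).trace + (D * Aᵀ * Dᵀ).trace = 0 := by
    rw [← Matrix.trace_add, e1, Matrix.trace_zero]
  have e3 : (D * Aᵀ * Dᵀ).trace = (Aᵀ * (Dᵀ * D)).trace := by
    rw [Matrix.trace_mul_cycle]
    rw [← Matrix.mul_assoc]
    rw [Matrix.trace_mul_comm]
    rw [Matrix.mul_assoc]
  -- (A * M).trace + (Aᵀ * M).trace = ((A+Aᵀ)*M).trace
  have hsplit : ∀ M : Matrix (Fin d) (Fin d) ℝ, ((A + Aᵀ) * M).trace
      = (A * M).trace + (Aᵀ * M).trace := fun M => by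
    rw [Matrix.add_mul, Matrix.trace_add]
  have hDDTsym : (D * Dᵀ)ᵀ = D * Dᵀ := by
    rw [Matrix.transpose_mul, Matrix.transpose_transpose]
  have hDTDsym : (Dᵀ * D)ᵀ = Dᵀ * D := by
    rw [Matrix.transpose_mul, Matrix.transpose_transpose]
  have c1 : 2 * c * (D * Dᵀ).trace ≤ ((A + Aᵀ) * (D * Dᵀ)).trace :=
    coercive_trace hcoer hDDT
  have c2 : 2 * c * (Dᵀ * D).trace ≤ ((A + Aᵀ) * (Dᵀ * D)).trace :=
    coercive_trace hcoer hDTD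
  have s1 : ((A + Aᵀ) * (D * Dᵀ)).trace = 2 * (A * (D * Dᵀ)).trace := by
    rw [hsplit, ← trace_transpose_mul_symm hDDTsym]; ring
  have s2 : ((A + Aᵀ) * (Dᵀ * D)).trace = 2 * (Aᵀ * (Dᵀ * D)).trace := by
    rw [hsplit, trace_transpose_mul_symm hDTDsym]; ring
  have htr : (Dᵀ * D).trace = (D * Dᵀ).trace := Matrix.trace_mul_comm _ _
  have hnn : 0 ≤ (D * Dᵀ).trace := trace_nonneg_of_psd hDDT
  have hzero : (D * Dᵀ).trace = 0 := by
    rw [e3] at e2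
    rw [htr] at c2
    nlinarith
  exact eq_zero_of_trace_mul_transpose hzero

/-- the Lyapunov operator as a linear map -/
def lyapMap (A : Matrix (Fin d) (Fin d) ℝ) :
    Matrix (Fin d) (Fin d) ℝ →ₗ[ℝ] Matrix (Fin d) (Fin d) ℝ where
  toFun X := A * X + X * Aᵀ
  map_add' X Y := by simp only [Matrix.mul_add, Matrix.add_mul]; abel
  map_smul' r X := by simp only [Matrix.mul_smul, Matrix.smul_mul, RingHom.id_apply, smul_add]

lemma lyap_surj {A : Matrix (Fin d) (Fin d) ℝ} {c : ℝ} (hc : 0 < c)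
    (hcoer : (A + Aᵀ - (2 * c) • (1 : Matrix (Fin d) (Fin d) ℝ)).PosSemidef)
    (E : Matrix (Fin d) (Fin d) ℝ) :
    ∃ X : Matrix (Fin d) (Fin d) ℝ, A * X + X * Aᵀ = E := by
  have hinj : Function.Injective (lyapMap A) := by
    intro X Y hXY
    have h0 : lyapMap A (X - Y) = 0 := by rw [map_sub, hXY, sub_self]
    have : A * (X - Y) + (X - Y) * Aᵀ = 0 := h0
    have := lyap_inj hc hcoer this
    exact sub_eq_zero.mp this
  obtain ⟨X, hX⟩ := LinearMap.injective_iff_surjective.mp hinj E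
  exact ⟨X, hX⟩


lemma coer_vec {A : Matrix (Fin d) (Fin d) ℝ} {c : ℝ}
    (hcoer : (A + Aᵀ - (2 * c) • (1 : Matrix (Fin d) (Fin d) ℝ)).PosSemidef)
    (v : Fin d → ℝ) : 2 * c * (v ⬝ᵥ v) ≤ v ⬝ᵥ ((A + Aᵀ) *ᵥ v) := by
  have h := hcoer.dotProduct_mulVec_nonneg v
  simp only [star_trivial, Matrix.sub_mulVec, dotProduct_sub] at h
  have h1 : v ⬝ᵥ (((2 * c) • (1 : Matrix (Fin d) (Fin d) ℝ)) *ᵥ v) = 2 * c * (v ⬝ᵥ v) := by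
    rw [Matrix.smul_mulVec, Matrix.one_mulVec, dotProduct_smul, smul_eq_mul]
  linarith [h1 ▸ h]

lemma quad_eig {A E X : Matrix (Fin d) (Fin d) ℝ} (hX : X.IsHermitian)
    (heq : A * X + X * Aᵀ = E) (i : Fin d) :
    (⇑(hX.eigenvectorBasis i)) ⬝ᵥ (E *ᵥ ⇑(hX.eigenvectorBasis i)) =
      hX.eigenvalues i * ((⇑(hX.eigenvectorBasis i)) ⬝ᵥ ((A + Aᵀ) *ᵥ ⇑(hX.eigenvectorBasis i))) := by
  set v : Fin d → ℝ := ⇑(hX.eigenvectorBasis i) with hv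
  have hXv : X *ᵥ v = hX.eigenvalues i • v := hX.mulVec_eigenvectorBasis i
  have hXT : Xᵀ = X := by
    have := hX.eq
    rwa [Matrix.conjTranspose_eq_transpose_of_trivial] at this
  have hvecMul : v ᵥ* X = X *ᵥ v := by
    rw [← Matrix.mulVec_transpose, hXT]
  have h1 : v ⬝ᵥ ((A * X) *ᵥ v) = hX.eigenvalues i * (v ⬝ᵥ (A *ᵥ v)) := by
    rw [← Matrix.mulVec_mulVec, hXv, Matrix.mulVec_smul, dotProduct_smul, smul_eq_mul]
  have h2 : v ⬝ᵥ ((X * Aᵀ) *ᵥ v) = hX.eigenvalues i * (v ⬝ᵥ (Aᵀ *ᵥ v)) := by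
    rw [← Matrix.mulVec_mulVec, Matrix.dotProduct_mulVec, hvecMul, hXv,
      smul_dotProduct, smul_eq_mul]
  rw [← heq, Matrix.add_mulVec, dotProduct_add, h1, h2, Matrix.add_mulVec,
    dotProduct_add, mul_add]

lemma unit_eigvec {X : Matrix (Fin d) (Fin d) ℝ} (hX : X.IsHermitian) (i : Fin d) :
    (⇑(hX.eigenvectorBasis i)) ⬝ᵥ (⇑(hX.eigenvectorBasis i)) = 1 := by
  have hnorm : ‖hX.eigenvectorBasis i‖ = 1 := hX.eigenvectorBasis.orthonormal.1 i
  have h : inner (𝕜 := ℝ) (hX.eigenvectorBasis i) (hX.eigenvectorBasis i) = 1 := by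
    rw [real_inner_self_eq_norm_sq, hnorm]; norm_num
  exact h

lemma dot_le_clm_norm {E : Matrix (Fin d) (Fin d) ℝ} (w : EuclideanSpace ℝ (Fin d))
    (hw : ‖w‖ = 1) :
    (⇑w) ⬝ᵥ (E *ᵥ ⇑w) ≤ ‖Matrix.toEuclideanCLM (𝕜 := ℝ) (n := Fin d) E‖ := by
  set T := Matrix.toEuclideanCLM (𝕜 := ℝ) (n := Fin d) E with hT
  have h1 : (⇑w) ⬝ᵥ (E *ᵥ ⇑w) = inner (𝕜 := ℝ) w (T w) := (dotProduct_comm _ _).trans rfl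
  rw [h1]
  calc inner (𝕜 := ℝ) w (T w) ≤ ‖w‖ * ‖T w‖ := real_inner_le_norm _ _
    _ ≤ ‖w‖ * (‖T‖ * ‖w‖) := by
      gcongr
      exact T.le_opNorm w
    _ = ‖T‖ := by rw [hw]; ring


lemma eig_bounds {A E X : Matrix (Fin d) (Fin d) ℝ} {c : ℝ} (hc : 0 < c)
    (hcoer : (A + Aᵀ - (2 * c) • (1 : Matrix (Fin d) (Fin d) ℝ)).PosSemidef)
    (hE : E.PosSemidef) (hX : X.IsHermitian) (heq : A * X + X * Aᵀ = E) (i : Fin d) :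
    0 ≤ hX.eigenvalues i ∧
      hX.eigenvalues i * (2 * c) ≤ ‖Matrix.toEuclideanCLM (𝕜 := ℝ) (n := Fin d) E‖ := by
  set v : Fin d → ℝ := ⇑(hX.eigenvectorBasis i) with hv
  have hq := quad_eig hX heq i
  have hunit := unit_eigvec hX i
  have hs : 2 * c * (v ⬝ᵥ v) ≤ v ⬝ᵥ ((A + Aᵀ) *ᵥ v) := coer_vec hcoer v
  rw [hunit, mul_one] at hs
  have hEv : 0 ≤ v ⬝ᵥ (E *ᵥ v) := by simpa using hE.dotProduct_mulVec_nonneg v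
  have hnorm : ‖hX.eigenvectorBasis i‖ = 1 := hX.eigenvectorBasis.orthonormal.1 i
  have hub : v ⬝ᵥ (E *ᵥ v) ≤ ‖Matrix.toEuclideanCLM (𝕜 := ℝ) (n := Fin d) E‖ :=
    dot_le_clm_norm (hX.eigenvectorBasis i) hnorm
  have h0 : 0 ≤ hX.eigenvalues i := by nlinarith
  exact ⟨h0, by nlinarith⟩

lemma norm_sq_eq_sum_repr {X : Matrix (Fin d) (Fin d) ℝ} (hX : X.IsHermitian)
    (x : EuclideanSpace ℝ (Fin d)) :
    ‖x‖ ^ 2 = ∑ i, (hX.eigenvectorBasis.repr x i) ^ 2 := by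
  rw [← hX.eigenvectorBasis.repr.norm_map x, EuclideanSpace.norm_eq,
    Real.sq_sqrt (Finset.sum_nonneg fun i _ => sq_nonneg _)]
  simp [Real.norm_eq_abs, sq_abs]

lemma clm_norm_le {X : Matrix (Fin d) (Fin d) ℝ} (hX : X.IsHermitian) {t : ℝ} (ht0 : 0 ≤ t)
    (hle : ∀ i, 0 ≤ hX.eigenvalues i ∧ hX.eigenvalues i ≤ t) :
    ‖Matrix.toEuclideanCLM (𝕜 := ℝ) (n := Fin d) X‖ ≤ t := by
  set b := hX.eigenvectorBasis with hb
  set T := Matrix.toEuclideanCLM (𝕜 := ℝ) (n := Fin d) X with hT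
  refine T.opNorm_le_bound ht0 fun w => ?_
  have hXT : Xᵀ = X := by
    have := hX.eq
    rwa [Matrix.conjTranspose_eq_transpose_of_trivial] at this
  have hrepr : ∀ i, b.repr (T w) i = hX.eigenvalues i * b.repr w i := by
    intro i
    rw [b.repr_apply_apply, b.repr_apply_apply]
    have lhs : inner (𝕜 := ℝ) (b i) (T w) = (⇑(b i)) ⬝ᵥ (X *ᵥ ⇑w) := (dotProduct_comm _ _).trans rfl
    have rhs : inner (𝕜 := ℝ) (b i) w = (⇑(b i)) ⬝ᵥ (⇑w) := (dotProduct_comm _ _).trans rfl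
    have hvm : (⇑(b i)) ᵥ* X = X *ᵥ (⇑(b i)) := by
      rw [← Matrix.mulVec_transpose, hXT]
    rw [lhs, rhs, Matrix.dotProduct_mulVec, hvm, hX.mulVec_eigenvectorBasis i,
      smul_dotProduct, smul_eq_mul]
  have h1 : ‖T w‖ ^ 2 = ∑ i, (hX.eigenvalues i * b.repr w i) ^ 2 := by
    rw [norm_sq_eq_sum_repr hX (T w)]
    exact Finset.sum_congr rfl fun i _ => by rw [hrepr i]
  have h2 : ‖T w‖ ^ 2 ≤ (t * ‖w‖) ^ 2 := by
    rw [h1, mul_pow, norm_sq_eq_sum_repr hX w, Finset.mul_sum]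
    refine Finset.sum_le_sum fun i _ => ?_
    rw [mul_pow]
    exact mul_le_mul_of_nonneg_right
      (pow_le_pow_left₀ (hle i).1 (hle i).2 2) (sq_nonneg _)
  exact le_of_pow_le_pow_left₀ two_ne_zero (by positivity) h2

end Stmt10Aux

open Stmt10Aux in
/-- Lyapunov equation: if `A + Aᵀ ⪰ 2cI` with `c > 0` and `E ⪰ 0` is symmetric,
there is a unique symmetric positive semidefinite `X` with `AX + XAᵀ = E`, and it
satisfies `‖X‖ ≤ ‖E‖/(2c)` and `Tr(X) ≤ Tr(E)/(2c)`. -/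
theorem stmt10 {d : ℕ} (A E : Matrix (Fin d) (Fin d) ℝ) (c : ℝ) (hc : 0 < c)
    (hcoer : (A + Aᵀ - (2 * c) • (1 : Matrix (Fin d) (Fin d) ℝ)).PosSemidef)
    (hE : E.PosSemidef) :
    (∃! X : Matrix (Fin d) (Fin d) ℝ, X.PosSemidef ∧ A * X + X * Aᵀ = E) ∧
      ∀ X : Matrix (Fin d) (Fin d) ℝ, X.PosSemidef → A * X + X * Aᵀ = E →
        ‖Matrix.toEuclideanCLM (𝕜 := ℝ) (n := Fin d) X‖ ≤
            ‖Matrix.toEuclideanCLM (𝕜 := ℝ) (n := Fin d) E‖ / (2 * c) ∧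
          X.trace ≤ E.trace / (2 * c) := by
  have h2c : (0:ℝ) < 2 * c := by linarith
  have key : ∀ X : Matrix (Fin d) (Fin d) ℝ, X.PosSemidef → A * X + X * Aᵀ = E →
      ‖Matrix.toEuclideanCLM (𝕜 := ℝ) (n := Fin d) X‖ ≤
          ‖Matrix.toEuclideanCLM (𝕜 := ℝ) (n := Fin d) E‖ / (2 * c) ∧
        X.trace ≤ E.trace / (2 * c) := by
    intro X hX heq
    have hH : X.IsHermitian := hX.1
    have hXT : Xᵀ = X := by
      have := hH.eq
      rwa [Matrix.conjTranspose_eq_transpose_of_trivial] at this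
    constructor
    · have hEnn : (0:ℝ) ≤ ‖Matrix.toEuclideanCLM (𝕜 := ℝ) (n := Fin d) E‖ := norm_nonneg _
      refine clm_norm_le hH (by positivity) fun i => ?_
      obtain ⟨h0, h1⟩ := eig_bounds hc hcoer hE hH heq i
      exact ⟨h0, (le_div_iff₀ h2c).mpr h1⟩
    · have htr : E.trace = ((A + Aᵀ) * X).trace := by
        rw [← heq, Matrix.trace_add, Matrix.add_mul, Matrix.trace_add,
          trace_transpose_mul_symm hXT, Matrix.trace_mul_comm X Aᵀ]
      have hge := coercive_trace hcoer hX
      rw [le_div_iff₀ h2c]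
      rw [htr]
      linarith
  obtain ⟨X₀, hX₀⟩ := lyap_surj hc hcoer E
  have hEt : Eᵀ = E := by
    have := hE.1.eq
    rwa [Matrix.conjTranspose_eq_transpose_of_trivial] at this
  have hX₀T : A * X₀ᵀ + X₀ᵀ * Aᵀ = E := by
    have h := congrArg Matrix.transpose hX₀
    rw [Matrix.transpose_add, Matrix.transpose_mul, Matrix.transpose_mul,
      Matrix.transpose_transpose, hEt] at h
    rw [← h]; abel
  have hsym : X₀ᵀ = X₀ := by
    have hz : A * (X₀ᵀ - X₀) + (X₀ᵀ - X₀) * Aᵀ = 0 := by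
      rw [Matrix.mul_sub, Matrix.sub_mul]
      have : A * X₀ᵀ + X₀ᵀ * Aᵀ - (A * X₀ + X₀ * Aᵀ) = 0 := by rw [hX₀T, hX₀, sub_self]
      rw [← this]; abel
    exact sub_eq_zero.mp (lyap_inj hc hcoer hz)
  have hH : X₀.IsHermitian := by
    rw [Matrix.IsHermitian, Matrix.conjTranspose_eq_transpose_of_trivial, hsym]
  have hpsd : X₀.PosSemidef :=
    hH.posSemidef_iff_eigenvalues_nonneg.mpr fun i => (eig_bounds hc hcoer hE hH hX₀ i).1
  refine ⟨⟨X₀, ⟨hpsd, hX₀⟩, fun Y hY => ?_⟩, key⟩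
  have hz : A * (Y - X₀) + (Y - X₀) * Aᵀ = 0 := by
    rw [Matrix.mul_sub, Matrix.sub_mul]
    have : A * Y + Y * Aᵀ - (A * X₀ + X₀ * Aᵀ) = 0 := by rw [hY.2, hX₀, sub_self]
    rw [← this]; abel
  exact sub_eq_zero.mp (lyap_inj hc hcoer hz)
end

section
/- Let H be a d×d real symmetric matrix with ‖H‖ ≤ M and let μ be a probability measure such that E_μ[H] = 0 (entrywise), where H = H(x) is a measurable matrix-valued function of x ∼ μ. Then ‖E_μ[exp(tH)]‖ ≤ exp(tM) − tM for every t > 0. -/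
open Matrix MeasureTheory

set_option maxHeartbeats 1000000

attribute [local instance] Matrix.frobeniusNormedAddCommGroup Matrix.frobeniusNormedSpace

open NormedSpace Nat in
/-- Remainder bound for the exponential in a real Banach algebra. -/
lemma exp_remainder_norm_le {A : Type*} [NormedRing A] [NormedAlgebra ℝ A] [CompleteSpace A]
    (a : A) : ‖NormedSpace.exp a - 1 - a‖ ≤ Real.exp ‖a‖ - 1 - ‖a‖ := by
  have hs : Summable fun n : ℕ => ((n ! : ℝ)⁻¹) • a ^ n := expSeries_summable' (𝕂 := ℝ) a
  have hsr : Summable fun n : ℕ => ((n ! : ℝ)⁻¹) * ‖a‖ ^ n := by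
    simpa [div_eq_inv_mul] using Real.summable_pow_div_factorial ‖a‖
  have hs1 : Summable fun n : ℕ => ((n + 1)! : ℝ)⁻¹ • a ^ (n + 1) :=
    (summable_nat_add_iff 1).mpr hs
  have hs2 : Summable fun n : ℕ => ((n + 2)! : ℝ)⁻¹ • a ^ (n + 2) :=
    (summable_nat_add_iff 2).mpr hs
  have hsr1 : Summable fun n : ℕ => ((n + 1)! : ℝ)⁻¹ * ‖a‖ ^ (n + 1) :=
    (summable_nat_add_iff 1).mpr hsr
  have hsr2 : Summable fun n : ℕ => ((n + 2)! : ℝ)⁻¹ * ‖a‖ ^ (n + 2) :=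
    (summable_nat_add_iff 2).mpr hsr
  have hexp : NormedSpace.exp a - 1 - a = ∑' n : ℕ, ((n + 2)! : ℝ)⁻¹ • a ^ (n + 2) := by
    have h0 : NormedSpace.exp a = ∑' n : ℕ, ((n ! : ℝ)⁻¹) • a ^ n := by
      rw [NormedSpace.exp_eq_tsum (𝕂 := ℝ)]
    rw [h0, Summable.tsum_eq_zero_add hs, Summable.tsum_eq_zero_add hs1]
    simp [Nat.factorial]
  have hrexp : Real.exp ‖a‖ - 1 - ‖a‖ = ∑' n : ℕ, ((n + 2)! : ℝ)⁻¹ * ‖a‖ ^ (n + 2) := by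
    have h0 : Real.exp ‖a‖ = ∑' n : ℕ, ((n ! : ℝ)⁻¹) * ‖a‖ ^ n := by
      rw [Real.exp_eq_exp_ℝ, NormedSpace.exp_eq_tsum (𝕂 := ℝ)]; simp [smul_eq_mul]
    rw [h0, Summable.tsum_eq_zero_add hsr, Summable.tsum_eq_zero_add hsr1]
    simp [Nat.factorial]
  rw [hexp, hrexp]
  have hbnd : ∀ n : ℕ, ‖((n + 2)! : ℝ)⁻¹ • a ^ (n + 2)‖ ≤ ((n + 2)! : ℝ)⁻¹ * ‖a‖ ^ (n + 2) := by
    intro n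
    rw [norm_smul]
    gcongr
    · simp
    · exact norm_pow_le' a (Nat.succ_pos _)
  have hns : Summable fun n : ℕ => ‖((n + 2)! : ℝ)⁻¹ • a ^ (n + 2)‖ :=
    hsr2.of_nonneg_of_le (fun n => norm_nonneg _) hbnd
  exact (norm_tsum_le_tsum_norm hns).trans (Summable.tsum_le_tsum hbnd hns hsr2)

lemma exp_sub_mono {r s : ℝ} (h0 : 0 ≤ r) (hrs : r ≤ s) :
    Real.exp r - r ≤ Real.exp s - s := by
  have h1 : Real.exp (s - r) * Real.exp r = Real.exp s := by
    rw [← Real.exp_add]; ring_nf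
  have h2 := Real.add_one_le_exp (s - r)
  have h3 := Real.one_le_exp h0
  nlinarith [Real.exp_pos (s - r)]

/-- If `H(x)` is a symmetric-matrix-valued function with spectral norm bounded by `M`
and mean zero under the probability measure `μ`, then for every `t > 0`,
`‖E_μ[exp(tH)]‖ ≤ exp(tM) − tM` in the spectral norm. -/
theorem stmt13 {d : ℕ} {S : Type*} [MeasurableSpace S] (μ : Measure S)
    [IsProbabilityMeasure μ]
    (H : S → Matrix (Fin d) (Fin d) ℝ) (M : ℝ)
    (hsymm : ∀ x, (H x).IsSymm)
    (hbound : ∀ x, ‖Matrix.toEuclideanCLM (𝕜 := ℝ) (n := Fin d) (H x)‖ ≤ M)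
    (hHint : @Integrable _ _ SeminormedAddGroup.toContinuousENorm _ _ H μ) (hmean : ∫ x, H x ∂μ = 0)
    (t : ℝ) (ht : 0 < t)
    (hexpInt : @Integrable _ _ SeminormedAddGroup.toContinuousENorm _ _
      (fun x => NormedSpace.exp (t • H x)) μ) :
    ‖Matrix.toEuclideanCLM (𝕜 := ℝ) (n := Fin d)
        (∫ x, NormedSpace.exp (t • H x) ∂μ)‖ ≤ Real.exp (t * M) - t * M := by
  set B := EuclideanSpace ℝ (Fin d) →L[ℝ] EuclideanSpace ℝ (Fin d)
  set e : Matrix (Fin d) (Fin d) ℝ → B :=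
    fun m => Matrix.toEuclideanCLM (𝕜 := ℝ) (n := Fin d) m with he
  let T : Matrix (Fin d) (Fin d) ℝ →ₗ[ℝ] B :=
    { toFun := e
      map_add' := fun x y => map_add _ x y
      map_smul' := fun c x => map_smul (Matrix.toEuclideanCLM (𝕜 := ℝ) (n := Fin d)) c x }
  let Tc : Matrix (Fin d) (Fin d) ℝ →L[ℝ] B := LinearMap.toContinuousLinearMap T
  have hTc : ∀ m, Tc m = e m := fun m => rfl
  have hcont : Continuous e := Tc.continuous
  -- A x = e (t • H x)
  set A : S → B := fun x => e (t • H x) with hA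
  have hmap : ∀ x, e (NormedSpace.exp (t • H x)) = NormedSpace.exp (A x) := by
    intro x
    show Tc (NormedSpace.exp (t • H x)) = NormedSpace.exp (A x)
    letI : NormedRing (Matrix (Fin d) (Fin d) ℝ) := Matrix.frobeniusNormedRing
    letI : NormedAlgebra ℝ (Matrix (Fin d) (Fin d) ℝ) := Matrix.frobeniusNormedAlgebra
    rw [NormedSpace.exp_eq_tsum (𝕂 := ℝ), NormedSpace.exp_eq_tsum (𝕂 := ℝ),
      Tc.map_tsum (NormedSpace.expSeries_summable' (𝕂 := ℝ) (t • H x))]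
    exact tsum_congr fun n => by
      rw [_root_.map_smul]
      exact congrArg _ (_root_.map_pow (Matrix.toEuclideanCLM (𝕜 := ℝ) (n := Fin d)) (t • H x) n)
  have hAint : Integrable A μ := Tc.integrable_comp (hHint.smul t)
  have hgint : Integrable (fun x => NormedSpace.exp (A x)) μ := by
    exact (Tc.integrable_comp hexpInt).congr
      (Filter.Eventually.of_forall fun x => hmap x)
  set R : S → B := fun x => NormedSpace.exp (A x) - 1 - A x with hR
  have hRint : Integrable R μ := (hgint.sub (integrable_const 1)).sub hAint
  -- norm bound on A
  have hAnorm : ∀ x, ‖A x‖ ≤ t * M := by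
    intro x
    have : A x = t • e (H x) :=
      _root_.map_smul (Matrix.toEuclideanCLM (𝕜 := ℝ) (n := Fin d)) t (H x)
    rw [this]
    have h2 : ‖t • e (H x)‖ = ‖t‖ * ‖e (H x)‖ := norm_smul t (e (H x))
    rw [h2, Real.norm_eq_abs, abs_of_pos ht]
    exact mul_le_mul_of_nonneg_left (hbound x) ht.le
  -- ∫ A = 0
  have hintA : ∫ x, A x ∂μ = 0 := by
    have h1 : ∫ x, A x ∂μ = Tc (∫ x, t • H x ∂μ) :=
      (Tc.integral_comp_comm (hHint.smul t))
    rw [h1, integral_smul, hmean, smul_zero, map_zero]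
  -- main decomposition
  have hdecomp : Matrix.toEuclideanCLM (𝕜 := ℝ) (n := Fin d)
        (∫ x, NormedSpace.exp (t • H x) ∂μ)
      = 1 + ∫ x, R x ∂μ := by
    show e (∫ x, NormedSpace.exp (t • H x) ∂μ) = 1 + ∫ x, R x ∂μ
    rw [← hTc]
    refine (Tc.integral_comp_comm hexpInt).symm.trans ?_
    have hpt : ∀ x, Tc (NormedSpace.exp (t • H x)) = 1 + A x + R x := by
      intro x; rw [hTc, hmap]; simp [hR]
    refine (integral_congr_ae (Filter.Eventually.of_forall hpt)).trans ?_
    have h12 : Integrable (fun a => (1 : B) + A a) μ := (integrable_const (1 : B)).add hAint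
    rw [integral_add h12 hRint, integral_add (integrable_const (1 : B)) hAint, hintA, integral_const]
    simp
  rw [hdecomp]
  have h1 : ‖(1 : B)‖ ≤ 1 := by
    rw [ContinuousLinearMap.one_def]; exact ContinuousLinearMap.norm_id_le
  have hRnorm : ∀ x, ‖R x‖ ≤ Real.exp (t * M) - 1 - (t * M) := by
    intro x
    refine (exp_remainder_norm_le (A x)).trans ?_
    have := exp_sub_mono (norm_nonneg (A x)) (hAnorm x)
    linarith
  calc ‖1 + ∫ x, R x ∂μ‖ ≤ ‖(1 : B)‖ + ‖∫ x, R x ∂μ‖ := norm_add_le _ _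
    _ ≤ 1 + ∫ x, ‖R x‖ ∂μ := add_le_add h1 (norm_integral_le_integral_norm _)
    _ ≤ 1 + ∫ _x, (Real.exp (t * M) - 1 - t * M) ∂μ := by
        exact add_le_add le_rfl (integral_mono hRint.norm (integrable_const _) hRnorm)
    _ = Real.exp (t * M) - t * M := by
        rw [integral_const]; simp; ring
end
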